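/- Let G be the context-free grammar (derivation) on variables {x,y} with D_G(x) = y and D_G(y) = y. Then for n ≥ 1, (x·D_G)^n(y) = Σ_{i=1}^{n} A(n,i) x^{n+1-i} y^i, where A(n,i) are the Eulerian numbers. -/

import Mathlib

/-!
Deleting the largest letter `n` from `π ∈ S_{n+1}` is a bijection onto `S_n × Fin (n + 1)`
(the remaining word and the position of `n`). Putting `n` back right after a descent of `σ`
(the last position counts) keeps the number of descents, putting it anywhere else adds one,
which gives `A(n+1, k+1) = (k+1) A(n, k+1) + (n+1-k) A(n, k)`. On the other side
`x D(x^a y^b) = a x^a y^(b+1) + b x^(a+1) y^b`, so `x D` sends `∑ A(n,i) x^(n+1-i) y^i` to the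
form whose coefficients are given by exactly this recurrence. Since `x D(y) = x D(x)`, the
iterates on `y` agree with those on `x`, and those follow by induction from `(x D)^0 x = x`.
-/

/-- Number of descents of a permutation of `Fin n`, with the last index always a descent. -/
def des (n : ℕ) (π : Equiv.Perm (Fin n)) : ℕ :=
  (Finset.univ.filter (fun i : Fin n =>
    (if h : (i : ℕ) + 1 < n then (((π ⟨(i : ℕ) + 1, h⟩ : Fin n) : ℕ) : ℤ) else (-1 : ℤ))
      < (((π i : Fin n) : ℕ) : ℤ))).card

/-- The Eulerian number `A(n,i) = #{π ∈ S_n : des π = i}`. -/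
def eulerianNum (n i : ℕ) : ℕ :=
  (Finset.univ.filter (fun π : Equiv.Perm (Fin n) => des n π = i)).card

open Finset Equiv

section Descents

variable {n : ℕ}

/-- The one-line notation of `π`, padded with `-1` past the end: this is what makes the last
position a descent in `des`. -/
def paddedVal (π : Perm (Fin n)) (m : ℕ) : ℤ :=
  if h : m < n then ((π ⟨m, h⟩ : ℕ) : ℤ) else -1

def descentSet (π : Perm (Fin n)) : Finset (Fin n) :=
  {i | paddedVal π (i + 1) < paddedVal π i}

lemma paddedVal_val (π : Perm (Fin n)) (i : Fin n) : paddedVal π i = (π i : ℕ) := by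
  simp [paddedVal]

lemma paddedVal_lt (π : Perm (Fin n)) (m : ℕ) : paddedVal π m < n := by
  unfold paddedVal; split_ifs <;> omega

lemma des_eq_card_descentSet (π : Perm (Fin n)) : des n π = #(descentSet π) := by
  simp only [descentSet, paddedVal_val]; rfl

lemma last_mem_descentSet (π : Perm (Fin (n + 1))) : Fin.last n ∈ descentSet π := by
  rw [descentSet, mem_filter, paddedVal_val, Fin.val_last, paddedVal, dif_neg (lt_irrefl _)]
  exact ⟨mem_univ _, by omega⟩

lemma des_le (π : Perm (Fin n)) : des n π ≤ n := by
  simpa [des_eq_card_descentSet] using card_le_univ (descentSet π)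

noncomputable def removeMax (π : Perm (Fin (n + 1))) : Perm (Fin n) :=
  have hne : ∀ i, π ((π⁻¹ (Fin.last n)).succAbove i) ≠ Fin.last n := fun i h =>
    Fin.succAbove_ne _ i (π.injective (h.trans (π.apply_symm_apply _).symm))
  Equiv.ofBijective (fun i => (π ((π⁻¹ (Fin.last n)).succAbove i)).castPred (hne i))
    (Finite.injective_iff_bijective.mp fun _ _ h =>
      Fin.succAbove_right_injective (π.injective (Fin.castPred_inj.mp h)))

lemma castSucc_removeMax (π : Perm (Fin (n + 1))) (i : Fin n) :
    (removeMax π i).castSucc = π ((π⁻¹ (Fin.last n)).succAbove i) := by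
  simp [removeMax]

lemma paddedVal_eq_of_removeMax (π : Perm (Fin (n + 1))) (m : ℕ) :
    paddedVal π m = if m < π⁻¹ (Fin.last n) then paddedVal (removeMax π) m
      else if m = π⁻¹ (Fin.last n) then n else paddedVal (removeMax π) (m - 1) := by
  set p := π⁻¹ (Fin.last n) with hp
  have hval : ∀ i : Fin n, paddedVal (removeMax π) i = (π (p.succAbove i) : ℕ) := fun i => by
    rw [paddedVal_val, ← castSucc_removeMax, Fin.val_castSucc]
  split_ifs with hlt heq
  · obtain ⟨i, rfl⟩ : ∃ i : Fin n, (i : ℕ) = m := ⟨⟨m, by omega⟩, rfl⟩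
    rw [hval, ← Fin.val_castSucc, paddedVal_val, Fin.succAbove_of_castSucc_lt _ _ hlt]
  · rw [heq, paddedVal_val, hp]
    simp only [Perm.coe_inv, apply_symm_apply, Fin.val_last]
  · by_cases hm : m < n + 1
    · obtain ⟨i, rfl⟩ : ∃ i : Fin n, (i : ℕ) + 1 = m :=
        ⟨⟨m - 1, by omega⟩, Nat.sub_add_cancel (by omega)⟩
      rw [Nat.add_sub_cancel, hval, ← Fin.val_succ, paddedVal_val,
        Fin.succAbove_of_le_castSucc _ _ (by rw [Fin.le_def, Fin.val_castSucc]; omega)]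
    · unfold paddedVal
      rw [dif_neg hm, dif_neg (by omega)]

lemma inv_last_mem_descentSet (π : Perm (Fin (n + 1))) :
    π⁻¹ (Fin.last n) ∈ descentSet π := by
  simp only [descentSet, mem_filter, mem_univ, true_and]
  rw [paddedVal_eq_of_removeMax π, paddedVal_eq_of_removeMax π (π⁻¹ (Fin.last n))]
  simpa using paddedVal_lt (removeMax π) _

lemma succAbove_mem_descentSet_iff (π : Perm (Fin (n + 1))) (i : Fin n) :
    (π⁻¹ (Fin.last n)).succAbove i ∈ descentSet π ↔
      i ∈ descentSet (removeMax π) ∧ i.succ ≠ π⁻¹ (Fin.last n) := by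
  set p := π⁻¹ (Fin.last n) with hp
  have hlt := paddedVal_lt (removeMax π) i
  simp only [descentSet, mem_filter, mem_univ, true_and, ne_eq, Fin.ext_iff, Fin.val_succ]
  rw [paddedVal_eq_of_removeMax π, paddedVal_eq_of_removeMax π ((p.succAbove i : ℕ)), ← hp]
  rcases lt_or_ge i.castSucc p with h | h
  · rw [Fin.succAbove_of_castSucc_lt _ _ h]
    rw [Fin.lt_def, Fin.val_castSucc] at h
    simp only [Fin.val_castSucc]
    split_ifs <;> omega
  · rw [Fin.succAbove_of_le_castSucc _ _ h]
    rw [Fin.le_def, Fin.val_castSucc] at h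
    simp only [Fin.val_succ]
    split_ifs <;> (try simp only [Nat.add_sub_cancel]) <;> omega

/-- Inserting the maximum right after a descent of `removeMax π` (the positions
`(descentSet (removeMax π)).map (Fin.succEmb n)`) creates no new descent; anywhere else it
creates one. -/
lemma des_succ_eq (π : Perm (Fin (n + 1))) :
    des (n + 1) π =
      1 + #(((descentSet (removeMax π)).map (Fin.succEmb n)).erase (π⁻¹ (Fin.last n))) := by
  have hsum : #(descentSet π) = ∑ j, if j ∈ descentSet π then 1 else 0 := by simp
  calc des (n + 1) π = 1 + #{i | (π⁻¹ (Fin.last n)).succAbove i ∈ descentSet π} := by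
        rw [des_eq_card_descentSet, hsum, Fin.sum_univ_succAbove _ (π⁻¹ (Fin.last n)),
          if_pos (inv_last_mem_descentSet π), card_filter]
    _ = 1 + #{i ∈ descentSet (removeMax π) | i.succ ≠ π⁻¹ (Fin.last n)} := by
        simp only [succAbove_mem_descentSet_iff, ← filter_filter, filter_univ_mem]
    _ = _ := by
        rw [← filter_ne', filter_map, card_map]
        rfl

end Descents

lemma card_filter_card_erase_eq {α : Type*} [Fintype α] [DecidableEq α] (T : Finset α)
    (k : ℕ) :
    #{a | #(T.erase a) = k} =
      (if #T = k + 1 then k + 1 else 0) + (if #T = k then Fintype.card α - k else 0) := by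
  by_cases h1 : #T = k + 1
  · have : ({a | #(T.erase a) = k} : Finset α) = T := by
      ext a
      by_cases ha : a ∈ T <;> simp [card_erase_eq_ite, ha, h1]
    simp [this, h1]
  by_cases h2 : #T = k
  · have : ({a | #(T.erase a) = k} : Finset α) = Tᶜ := by
      ext a
      by_cases ha : a ∈ T
      · have := card_pos.mpr ⟨a, ha⟩
        simp only [card_erase_eq_ite, ha, if_true, mem_filter, mem_univ, true_and, mem_compl,
          not_true_eq_false, iff_false]
        omega
      · simp [card_erase_eq_ite, ha, h2]
    simp [this, h2, card_compl]
  · rw [if_neg h1, if_neg h2, card_eq_zero, filter_eq_empty_iff]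
    intro a _
    rw [card_erase_eq_ite]
    split_ifs <;> omega

lemma removeMax_inv_last_injective {n : ℕ} :
    Function.Injective fun π : Perm (Fin (n + 1)) => (removeMax π, π⁻¹ (Fin.last n)) := by
  intro π π' h
  simp only [Prod.mk.injEq] at h
  ext j
  have := paddedVal_eq_of_removeMax π j
  rw [h.1, h.2, ← paddedVal_eq_of_removeMax π' j, paddedVal_val, paddedVal_val] at this
  exact_mod_cast this

noncomputable def removeMaxEquiv {n : ℕ} : Perm (Fin (n + 1)) ≃ Perm (Fin n) × Fin (n + 1) :=
  Equiv.ofBijective _ <| (Fintype.bijective_iff_injective_and_card _).mpr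
    ⟨removeMax_inv_last_injective, by simp [Fintype.card_perm, Nat.factorial_succ, mul_comm]⟩

lemma eulerianNum_succ_succ (n k : ℕ) :
    eulerianNum (n + 1) (k + 1) =
      (k + 1) * eulerianNum n (k + 1) + (n + 1 - k) * eulerianNum n k := by
  calc eulerianNum (n + 1) (k + 1)
      = #{q : Perm (Fin n) × Fin (n + 1) |
          #(((descentSet q.1).map (Fin.succEmb n)).erase q.2) = k} :=
        card_equiv removeMaxEquiv fun π => by simp [removeMaxEquiv, des_succ_eq, add_comm 1]
    _ = ∑ σ : Perm (Fin n), #{p | #(((descentSet σ).map (Fin.succEmb n)).erase p) = k} := by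
        simp only [card_filter, Fintype.sum_prod_type]
    _ = ∑ σ : Perm (Fin n),
          ((if des n σ = k + 1 then k + 1 else 0) + (if des n σ = k then n + 1 - k else 0)) := by
        simp [card_filter_card_erase_eq, des_eq_card_descentSet]
    _ = _ := by
        rw [sum_add_distrib, ← sum_filter, ← sum_filter, sum_const, sum_const, smul_eq_mul,
          smul_eq_mul, eulerianNum, eulerianNum, mul_comm, mul_comm (n + 1 - k)]

lemma eulerianNum_succ_zero (n : ℕ) : eulerianNum (n + 1) 0 = 0 := by
  simp only [eulerianNum, card_eq_zero, filter_eq_empty_iff, des_eq_card_descentSet]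
  exact fun π _ => nonempty_iff_ne_empty.mp ⟨_, last_mem_descentSet π⟩

lemma eulerianNum_eq_zero_of_lt {n i : ℕ} (h : n < i) : eulerianNum n i = 0 := by
  simp only [eulerianNum, card_eq_zero, filter_eq_empty_iff]
  exact fun π _ => (h.trans_le' (des_le π)).ne

lemma eulerianNum_zero_zero : eulerianNum 0 0 = 1 := by decide

section Grammar

variable {R A : Type*} [CommSemiring R] [CommSemiring A] [Algebra R A]

/-- Summing over `range (n + 2)` rather than `Icc 1 n` makes `eulerianForm x y 0 = x`, so the
recursion below can start at `n = 0`. -/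
def eulerianForm (x y : A) (n : ℕ) : A :=
  ∑ i ∈ range (n + 2), (eulerianNum n i : A) * x ^ (n + 1 - i) * y ^ i

lemma mul_derivation_monomial (d : Derivation R A A) {x y : A} (hx : d x = y) (hy : d y = y)
    (a b : ℕ) :
    x * d (x ^ a * y ^ b) = a * x ^ a * y ^ (b + 1) + b * x ^ (a + 1) * y ^ b := by
  rw [Derivation.leibniz, Derivation.leibniz_pow, Derivation.leibniz_pow, hx, hy]
  rcases a with _ | a <;> rcases b with _ | b <;>
    simp only [nsmul_eq_mul, smul_eq_mul, Nat.cast_zero, add_tsub_cancel_right] <;> ring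

lemma mul_derivation_eulerianForm (d : Derivation R A A) {x y : A} (hx : d x = y) (hy : d y = y)
    (n : ℕ) : x * d (eulerianForm x y n) = eulerianForm x y (n + 1) := by
  obtain ⟨g, hg⟩ : ∃ g : ℕ → A,
      g = fun i => (eulerianNum n i * i : ℕ) * x ^ (n + 2 - i) * y ^ i := ⟨_, rfl⟩
  have hshift : ∑ i ∈ range (n + 2), g i = ∑ j ∈ range (n + 2), g (j + 1) := by
    rw [sum_range_succ' g, sum_range_succ (fun j => g (j + 1)) (n + 1)]
    simp [hg, eulerianNum_eq_zero_of_lt (by omega : n < n + 1 + 1)]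
  have hterm : ∀ i ∈ range (n + 2), x * d ((eulerianNum n i : A) * x ^ (n + 1 - i) * y ^ i) =
      ((eulerianNum n i * (n + 1 - i) : ℕ) : A) * x ^ (n + 1 - i) * y ^ (i + 1) + g i := by
    intro i hi
    rw [mul_assoc, Derivation.leibniz, d.map_natCast, smul_zero, add_zero, smul_eq_mul,
      mul_left_comm, mul_derivation_monomial d hx hy, hg,
      show n + 1 - i + 1 = n + 2 - i by simp at hi; omega]
    push_cast
    ring
  have hnext : eulerianForm x y (n + 1) =
      ∑ j ∈ range (n + 2),
        (eulerianNum (n + 1) (j + 1) : A) * x ^ (n + 1 - j) * y ^ (j + 1) := by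
    rw [eulerianForm, sum_range_succ', eulerianNum_succ_zero, Nat.cast_zero, zero_mul, zero_mul,
      add_zero]
    simp
  rw [eulerianForm, map_sum, mul_sum, sum_congr rfl hterm, sum_add_distrib, hshift, hnext,
    ← sum_add_distrib]
  refine sum_congr rfl fun j _ => ?_
  simp only [eulerianNum_succ_succ, hg, show n + 2 - (j + 1) = n + 1 - j by omega]
  push_cast
  ring

lemma iterate_mul_derivation_eq_eulerianForm (d : Derivation R A A) {x y : A} (hx : d x = y)
    (hy : d y = y) (n : ℕ) : (fun p => x * d p)^[n] x = eulerianForm x y n := by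
  induction n with
  | zero => simp [eulerianForm, sum_range_succ, eulerianNum_zero_zero, eulerianNum_eq_zero_of_lt]
  | succ n ih => rw [Function.iterate_succ_apply', ih, mul_derivation_eulerianForm d hx hy]

lemma eulerianForm_eq_sum_Icc (x y : A) {n : ℕ} (hn : 1 ≤ n) :
    eulerianForm x y n = ∑ i ∈ Icc 1 n, (eulerianNum n i : A) * x ^ (n + 1 - i) * y ^ i := by
  obtain ⟨m, rfl⟩ : ∃ m, n = m + 1 := ⟨n - 1, by omega⟩
  rw [eulerianForm, sum_range_succ, sum_range_succ', eulerianNum_succ_zero,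
    eulerianNum_eq_zero_of_lt (by omega : m + 1 < m + 1 + 1), ← Ico_add_one_right_eq_Icc,
    sum_Ico_eq_sum_range]
  simp [add_comm 1]

end Grammar

/-- For the derivation with `D_G(x) = y`, `D_G(y) = y` on `ℚ[x,y]`,
`(x·D_G)^n(y) = ∑_{i=1}^n A(n,i) x^{n+1-i} y^i`. -/
theorem grammar_eulerian (d : Derivation ℚ (MvPolynomial (Fin 2) ℚ) (MvPolynomial (Fin 2) ℚ))
    (hx : d (MvPolynomial.X 0) = MvPolynomial.X 1)
    (hy : d (MvPolynomial.X 1) = MvPolynomial.X 1)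
    (n : ℕ) (hn : 1 ≤ n) :
    (fun p => MvPolynomial.X 0 * d p)^[n] (MvPolynomial.X 1)
      = ∑ i ∈ Finset.Icc 1 n, (eulerianNum n i : MvPolynomial (Fin 2) ℚ)
          * MvPolynomial.X 0 ^ (n + 1 - i) * MvPolynomial.X 1 ^ i := by
  obtain ⟨m, rfl⟩ : ∃ m, n = m + 1 := ⟨n - 1, by omega⟩
  have hxy : MvPolynomial.X 0 * d (MvPolynomial.X 1)
      = MvPolynomial.X 0 * d (MvPolynomial.X 0) := by
    rw [hx, hy]
  rw [Function.iterate_succ_apply, hxy, ← Function.iterate_succ_apply,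
    iterate_mul_derivation_eq_eulerianForm d hx hy, eulerianForm_eq_sum_Icc _ _ hn]
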